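/- Let p be a prime with p ≥ 5 and let H be a closed subgroup of SL₂(ℤ_p) whose image under the reduction map SL₂(ℤ_p) → SL₂(ℤ/pℤ) is all of SL₂(ℤ/pℤ). Then H = SL₂(ℤ_p). -/

import Mathlib

open Matrix Finset

namespace Stmt10Aux

variable {p : ℕ} [Fact p.Prime]

abbrev M2 (p : ℕ) [Fact p.Prime] := Matrix (Fin 2) (Fin 2) ℤ_[p]
abbrev SL (p : ℕ) [Fact p.Prime] := Matrix.SpecialLinearGroup (Fin 2) ℤ_[p]

/-! ### Entrywise divisibility -/

def MDvd (c : ℤ_[p]) (X : M2 p) : Prop := ∀ i j, c ∣ X i j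

lemma MDvd.zero (c : ℤ_[p]) : MDvd c (0 : M2 p) := fun i j => by simp
lemma MDvd.add {c : ℤ_[p]} {X Y : M2 p} (hX : MDvd c X) (hY : MDvd c Y) :
    MDvd c (X + Y) := fun i j => by simpa using dvd_add (hX i j) (hY i j)
lemma MDvd.neg {c : ℤ_[p]} {X : M2 p} (hX : MDvd c X) : MDvd c (-X) :=
  fun i j => by simpa using (hX i j).neg_right
lemma MDvd.sub {c : ℤ_[p]} {X Y : M2 p} (hX : MDvd c X) (hY : MDvd c Y) :
    MDvd c (X - Y) := fun i j => by simpa using dvd_sub (hX i j) (hY i j)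
lemma MDvd.mul_left {c : ℤ_[p]} {X : M2 p} (Y : M2 p) (hX : MDvd c X) :
    MDvd c (Y * X) := fun i j => by
  rw [Matrix.mul_apply]; exact Finset.dvd_sum fun k _ => (hX k j).mul_left _
lemma MDvd.mul_right {c : ℤ_[p]} {X : M2 p} (Y : M2 p) (hX : MDvd c X) :
    MDvd c (X * Y) := fun i j => by
  rw [Matrix.mul_apply]; exact Finset.dvd_sum fun k _ => (hX i k).mul_right _
lemma MDvd.mul {c d : ℤ_[p]} {X Y : M2 p} (hX : MDvd c X) (hY : MDvd d Y) :
    MDvd (c * d) (X * Y) := fun i j => by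
  rw [Matrix.mul_apply]; exact Finset.dvd_sum fun k _ => mul_dvd_mul (hX i k) (hY k j)
lemma MDvd.smul' {c d : ℤ_[p]} {X : M2 p} (hX : MDvd c X) : MDvd (d * c) (d • X) :=
  fun i j => by
  rw [Matrix.smul_apply, smul_eq_mul]; exact mul_dvd_mul_left d (hX i j)
lemma MDvd.smul_self (c : ℤ_[p]) (X : M2 p) : MDvd c (c • X) := fun i j => by
  rw [Matrix.smul_apply, smul_eq_mul]; exact Dvd.intro _ rfl
lemma MDvd.mono {c d : ℤ_[p]} {X : M2 p} (h : d ∣ c) (hX : MDvd c X) :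
    MDvd d X := fun i j => h.trans (hX i j)
lemma MDvd.sum {c : ℤ_[p]} {s : Finset ℕ} {f : ℕ → M2 p}
    (h : ∀ i ∈ s, MDvd c (f i)) : MDvd c (∑ i ∈ s, f i) := fun i j => by
  rw [Matrix.sum_apply]; exact Finset.dvd_sum fun k hk => h k hk i j
lemma MDvd.pow {c : ℤ_[p]} {X : M2 p} (hX : MDvd c X) (k : ℕ) :
    MDvd (c ^ (k+1)) (X ^ (k+1)) := by
  induction k with
  | zero => simpa using hX
  | succ k ih => rw [pow_succ _ (k+1), pow_succ _ (k+1)]; exact ih.mul hX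
lemma MDvd.exists_eq {c : ℤ_[p]} {X : M2 p} (h : MDvd c X) : ∃ Y, X = c • Y := by
  refine ⟨Matrix.of fun i j => (h i j).choose, ?_⟩
  ext i j
  rw [Matrix.smul_apply, smul_eq_mul]
  exact (h i j).choose_spec

/-! ### Coercion lemmas for `SL₂` -/

lemma val_mul (A B : SL p) : (A * B).val = A.val * B.val := rfl
lemma val_one : ((1 : SL p)).val = 1 := rfl
lemma val_inv (A : SL p) : (A⁻¹).val = adjugate A.val := rfl
lemma val_pow (A : SL p) (k : ℕ) : (A ^ k).val = A.val ^ k := by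
  induction k with
  | zero => simp [val_one]
  | succ k ih => rw [pow_succ, pow_succ, val_mul, ih]
lemma val_mul_inv (A : SL p) : A.val * (A⁻¹).val = 1 := by
  rw [← val_mul, mul_inv_cancel, val_one]
lemma val_inv_mul (A : SL p) : (A⁻¹).val * A.val = 1 := by
  rw [← val_mul, inv_mul_cancel, val_one]

lemma natCast_M2 (k : ℕ) : ((k : M2 p)) = ((k : ℤ_[p])) • (1 : M2 p) := by
  have : (k : M2 p) = k • (1 : M2 p) := by rw [nsmul_eq_mul, mul_one]
  rw [this, Nat.cast_smul_eq_nsmul ℤ_[p]]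
lemma MDvd.natCast {k : ℕ} (h : p ∣ k) : MDvd (p : ℤ_[p]) ((k : M2 p)) := by
  rw [natCast_M2]
  exact MDvd.mono (Nat.cast_dvd_cast h) (MDvd.smul_self _ _)
lemma MDvd_adjugate {c : ℤ_[p]} {X Y : M2 p} (h : MDvd c (X - Y)) :
    MDvd c (adjugate X - adjugate Y) := by
  have hs : ∀ a b, c ∣ X a b - Y a b := fun a b => by
    simpa [Matrix.sub_apply] using h a b
  intro i j
  rw [Matrix.adjugate_fin_two, Matrix.adjugate_fin_two]
  fin_cases i <;> fin_cases j <;>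
    simp only [Matrix.sub_apply, Fin.mk_zero, Fin.mk_one, Matrix.of_apply, Matrix.cons_val',
      Matrix.cons_val_zero, Matrix.cons_val_one, Matrix.head_cons, Matrix.empty_val',
      Matrix.cons_val_fin_one, Matrix.head_fin_const]
  · exact hs 1 1
  · simpa [neg_sub, sub_eq_neg_add, add_comm] using (hs 0 1).neg_right
  · simpa [neg_sub, sub_eq_neg_add, add_comm] using (hs 1 0).neg_right
  · exact hs 0 0

/-! ### The congruence predicate `Q` -/

variable (H : Subgroup (SL p))

/-- `H` contains an element congruent to `1 + p^n A` mod `p^(n+1)`. -/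
def Q (n : ℕ) (A : M2 p) : Prop :=
  ∃ h ∈ H, MDvd ((p : ℤ_[p]) ^ (n+1)) (h.val - (1 + ((p : ℤ_[p]) ^ n) • A))

variable {H}

lemma Q_zero (n : ℕ) : Q H n 0 :=
  ⟨1, H.one_mem, by simpa [val_one] using MDvd.zero (p := p) _⟩

lemma Q_add {n : ℕ} (hn : 1 ≤ n) {A B : M2 p} (hA : Q H n A) (hB : Q H n B) :
    Q H n (A + B) := by
  obtain ⟨h₁, hm₁, hc₁⟩ := hA
  obtain ⟨h₂, hm₂, hc₂⟩ := hB
  set π : ℤ_[p] := (p : ℤ_[p]) ^ n with hπ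
  refine ⟨h₁ * h₂, H.mul_mem hm₁ hm₂, ?_⟩
  have key : (h₁ * h₂).val - (1 + π • (A + B)) =
      (h₁.val - (1 + π • A)) * h₂.val + (1 + π • A) * (h₂.val - (1 + π • B))
        + (π • A) * (π • B) := by
    rw [val_mul]
    simp only [mul_add, add_mul, mul_sub, sub_mul, mul_one, one_mul, smul_add]
    abel
  rw [key]
  have h2n : (p : ℤ_[p]) ^ (n+1) ∣ π * π := by
    rw [hπ, ← pow_add]; exact pow_dvd_pow _ (by omega)
  exact ((hc₁.mul_right _).add (MDvd.mul_left _ hc₂)).add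
    (MDvd.mono h2n ((MDvd.smul_self π A).mul (MDvd.smul_self π B)))

lemma Q_congr {n : ℕ} {A B : M2 p} (hAB : MDvd (p : ℤ_[p]) (B - A)) (hQ : Q H n A) :
    Q H n B := by
  obtain ⟨h, hm, hc⟩ := hQ
  set π : ℤ_[p] := (p : ℤ_[p]) ^ n with hπ
  refine ⟨h, hm, ?_⟩
  have key : h.val - (1 + π • B) = (h.val - (1 + π • A)) - π • (B - A) := by
    simp only [smul_sub]; abel
  rw [key]
  refine hc.sub (MDvd.mono ?_ (hAB.smul' (d := π)))
  rw [hπ, pow_succ]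

lemma Q_conj {n : ℕ} {A : M2 p} {h₀ : SL p} (h₀m : h₀ ∈ H) (hA : Q H n A) :
    Q H n (h₀.val * A * (h₀⁻¹).val) := by
  obtain ⟨h, hm, hc⟩ := hA
  set π : ℤ_[p] := (p : ℤ_[p]) ^ n with hπ
  refine ⟨h₀ * h * h₀⁻¹, H.mul_mem (H.mul_mem h₀m hm) (H.inv_mem h₀m), ?_⟩
  have key : h₀.val * (h.val - (1 + π • A)) * (h₀⁻¹).val =
      (h₀ * h * h₀⁻¹).val - (1 + π • (h₀.val * A * (h₀⁻¹).val)) := by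
    rw [val_mul, val_mul, mul_sub, sub_mul, mul_add, add_mul, mul_one, val_mul_inv,
      mul_smul_comm, smul_mul_assoc]
  rw [← key]
  exact (hc.mul_left _).mul_right _

lemma Q_nsmul {n : ℕ} (hn : 1 ≤ n) {A : M2 p} (hA : Q H n A) (k : ℕ) :
    Q H n (k • A) := by
  induction k with
  | zero => simpa using Q_zero n
  | succ k ih => rw [succ_nsmul]; exact Q_add hn ih hA

lemma Q_smul {n : ℕ} (hn : 1 ≤ n) {A : M2 p} (hA : Q H n A) (x : ℤ_[p]) :
    Q H n (x • A) := by
  refine Q_congr ?_ (Q_nsmul hn hA x.zmodRepr)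
  have hx : (p : ℤ_[p]) ∣ x - (x.zmodRepr : ℤ_[p]) := by
    have := (PadicInt.zmodRepr_spec x).2
    rwa [PadicInt.maximalIdeal_eq_span_p, Ideal.mem_span_singleton] at this
  have : x • A - (x.zmodRepr : ℕ) • A = (x - (x.zmodRepr : ℤ_[p])) • A := by
    rw [sub_smul, Nat.cast_smul_eq_nsmul]
  rw [this]
  exact MDvd.mono hx (MDvd.smul_self _ _)

/-! ### Raising the congruence level by taking `p`-th powers -/

lemma Q_pow (hp : 5 ≤ p) {n : ℕ} (hn : 1 ≤ n) {A : M2 p} (hA : Q H n A) :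
    Q H (n+1) A := by
  obtain ⟨h, hm, hc⟩ := hA
  refine ⟨h ^ p, H.pow_mem hm p, ?_⟩
  set π : ℤ_[p] := (p : ℤ_[p]) ^ n with hπ
  set X : M2 p := h.val - (1 + π • A) with hX
  set M : M2 p := h.val - 1 with hMdef
  have hM' : M = π • A + X := by rw [hMdef, hX]; abel
  have hM : MDvd ((p : ℤ_[p]) ^ n) M := by
    rw [hM']
    exact (MDvd.smul_self π A).add (hc.mono (pow_dvd_pow _ (by omega)))
  obtain ⟨m2, hm2⟩ : ∃ m2, p = m2 + 2 := ⟨p - 2, by omega⟩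
  have hval : h.val = M + 1 := by rw [hMdef]; abel
  have hbin : (h ^ p).val = ∑ k ∈ range (p + 1), M ^ k * (p.choose k : M2 p) := by
    rw [val_pow, hval, (Commute.one_right M).add_pow]
    exact Finset.sum_congr rfl fun k _ => by rw [one_pow, mul_one]
  have hsplit : (h ^ p).val =
      (∑ i ∈ range (m2 + 1), M ^ (i+2) * (p.choose (i+2) : M2 p)) + M * (p : M2 p) + 1 := by
    rw [hbin]
    have : p + 1 = (m2 + 1) + 1 + 1 := by omega
    rw [this, Finset.sum_range_succ', Finset.sum_range_succ']
    simp only [zero_add, add_assoc, Nat.reduceAdd, pow_one, Nat.choose_one_right,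
      Nat.choose_zero_right, pow_zero, Nat.cast_one, mul_one, one_mul]
  have hMp : M * (↑p : M2 p) - ((p:ℤ_[p])^(n+1)) • A = (p:ℤ_[p]) • X := by
    rw [natCast_M2, mul_smul_comm, mul_one, hM', smul_add, smul_smul, hπ, ← pow_succ']
    abel
  have hgoal : (h ^ p).val - (1 + ((p:ℤ_[p])^(n+1)) • A) =
      (∑ i ∈ range (m2 + 1), M ^ (i+2) * (p.choose (i+2) : M2 p)) + (p:ℤ_[p]) • X := by
    rw [hsplit, ← hMp]; abel
  rw [hgoal]
  refine MDvd.add (MDvd.sum fun i hi => ?_) ?_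
  · rcases eq_or_lt_of_le (Nat.lt_succ_iff.mp (Finset.mem_range.mp hi)) with hip | hip
    · have hch : p.choose (i+2) = 1 := by rw [hip, ← hm2, Nat.choose_self]
      rw [hch, Nat.cast_one, mul_one]
      refine MDvd.mono ?_ (hM.pow (i+1))
      rw [← pow_mul]
      refine pow_dvd_pow _ ?_
      have h5 : 3 ≤ m2 := by omega
      calc n + 2 ≤ n * 5 := by omega
        _ ≤ n * (i + 2) := Nat.mul_le_mul le_rfl (by omega)
    · have hch : p ∣ p.choose (i+2) :=
        (Fact.out : p.Prime).dvd_choose_self (by omega) (by omega)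
      have h1 : MDvd ((p:ℤ_[p])^n * (p:ℤ_[p])^n) (M ^ (i+2)) := by
        refine MDvd.mono ?_ (hM.pow (i+1))
        rw [← pow_add, ← pow_mul]
        refine pow_dvd_pow _ ?_
        calc n + n = n * 2 := by ring
          _ ≤ n * (i + 2) := Nat.mul_le_mul le_rfl (by omega)
      refine MDvd.mono ?_ (h1.mul (MDvd.natCast hch))
      rw [← pow_add, ← pow_succ]
      exact pow_dvd_pow _ (by omega)
  · refine MDvd.mono ?_ (hc.smul' (d := (p:ℤ_[p])))
    rw [← pow_succ']

/-! ### The unipotent computation: base case of the congruence filtration -/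

noncomputable def u : M2 p := !![1, 1; 0, 1]
noncomputable def uinv : M2 p := !![1, -1; 0, 1]

lemma u_mul_uinv : (u : M2 p) * uinv = 1 := by
  ext a b
  fin_cases a <;> fin_cases b <;>
    simp only [u, uinv, Matrix.mul_apply, Fin.sum_univ_two] <;> simp

lemma upow (k : ℕ) : (u : M2 p) ^ k = !![1, (k : ℤ_[p]); 0, 1] := by
  induction k with
  | zero => ext a b; fin_cases a <;> fin_cases b <;> simp
  | succ k ih =>
      rw [pow_succ, ih]
      ext a b
      fin_cases a <;> fin_cases b <;>
        simp only [u, Matrix.mul_apply, Fin.sum_univ_two] <;> push_cast <;> simp <;> ring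

lemma uinvpow (k : ℕ) : (uinv : M2 p) ^ k = !![1, -(k : ℤ_[p]); 0, 1] := by
  induction k with
  | zero => ext a b; fin_cases a <;> fin_cases b <;> simp
  | succ k ih =>
      rw [pow_succ, ih]
      ext a b
      fin_cases a <;> fin_cases b <;>
        simp only [uinv, Matrix.mul_apply, Fin.sum_univ_two] <;> push_cast <;> simp <;> ring

lemma conjentry (C : M2 p) (i : ℕ) :
    (uinv : M2 p) ^ i * C * u ^ i =
      !![C 0 0 - (i:ℤ_[p]) * C 1 0,
         C 0 1 + (i:ℤ_[p]) * (C 0 0 - C 1 1) - (i:ℤ_[p])^2 * C 1 0;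
         C 1 0, C 1 1 + (i:ℤ_[p]) * C 1 0] := by
  rw [upow, uinvpow]
  ext a b
  fin_cases a <;> fin_cases b <;>
    simp only [Matrix.mul_apply, Fin.sum_univ_two] <;> simp <;> ring

noncomputable def Ssum (C : M2 p) (k : ℕ) : M2 p :=
  ∑ i ∈ range k, (uinv : M2 p) ^ i * C * u ^ i

lemma huu (Z : M2 p) : u * (uinv * Z) = Z := by
  rw [← mul_assoc, u_mul_uinv, one_mul]

lemma prodform (B : M2 p) (k : ℕ) :
    ∃ D : M2 p, ((u : M2 p) + (p : ℤ_[p]) • B) ^ k =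
      u ^ k + (p : ℤ_[p]) • (u ^ k * Ssum (uinv * B) k) + ((p : ℤ_[p])^2) • D := by
  set C : M2 p := uinv * B with hC
  induction k with
  | zero => exact ⟨0, by simp [Ssum]⟩
  | succ k ih =>
      obtain ⟨D, ihEq⟩ := ih
      refine ⟨u ^ k * Ssum C k * B + D * u + (p:ℤ_[p]) • (D * B), ?_⟩
      have key : u ^ k * B + u ^ k * Ssum C k * u = u ^ (k+1) * Ssum C (k+1) := by
        have hsucc : Ssum C (k+1) =
            (∑ i ∈ range k, (uinv : M2 p)^(i+1) * C * u^(i+1)) + C := by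
          rw [Ssum, Finset.sum_range_succ']
          simp
        rw [hsucc, mul_add, Finset.mul_sum]
        have hterm : ∀ i, u^(k+1) * ((uinv : M2 p)^(i+1) * C * u^(i+1)) =
            u ^ k * (uinv ^ i * C * u ^ i) * u := by
          intro i
          simp only [pow_succ, pow_succ' uinv, mul_assoc, huu]
        have hC2 : (u : M2 p)^(k+1) * C = u ^ k * B := by
          rw [hC, pow_succ, mul_assoc, huu]
        rw [hC2]
        have : ∑ i ∈ range k, (u:M2 p)^(k+1) * (uinv^(i+1) * C * u^(i+1)) =
            ∑ i ∈ range k, u ^ k * (uinv ^ i * C * u ^ i) * u :=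
          Finset.sum_congr rfl fun i _ => hterm i
        rw [this, ← Finset.sum_mul, ← Finset.mul_sum, ← Ssum]
        abel
      rw [pow_succ, ihEq, ← key]
      simp only [add_mul, mul_add, smul_mul_assoc, mul_smul_comm, smul_add, smul_smul,
        pow_succ]
      module

lemma sum_sq (n : ℕ) : 6 * ∑ i ∈ range (n+1), i^2 = (n+1)*n*(2*n+1) := by
  induction n with
  | zero => simp
  | succ n ih => rw [Finset.sum_range_succ, Nat.mul_add, ih]; ring

lemma Sp_dvd (hp : 5 ≤ p) (C : M2 p) : MDvd (p : ℤ_[p]) (Ssum C p) := by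
  have pp : p.Prime := Fact.out
  have hn1 : p ∣ ∑ i ∈ range p, i := by
    have h2 : (∑ i ∈ range p, i) * 2 = p * (p - 1) := Finset.sum_range_id_mul_two p
    have : p ∣ (∑ i ∈ range p, i) * 2 := h2 ▸ dvd_mul_right p (p-1)
    exact (Nat.Coprime.dvd_of_dvd_mul_right
      ((Nat.Prime.coprime_iff_not_dvd pp).mpr fun h => by
        have := Nat.le_of_dvd (by norm_num) h; omega) this)
  have hn2 : p ∣ ∑ i ∈ range p, i^2 := by
    obtain ⟨q, hq⟩ : ∃ q, p = q + 1 := ⟨p - 1, by omega⟩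
    have h6 : 6 * ∑ i ∈ range p, i^2 = p * (q * (2*q+1)) := by
      rw [hq, sum_sq]; ring
    have : p ∣ 6 * ∑ i ∈ range p, i^2 := h6 ▸ dvd_mul_right p _
    refine Nat.Coprime.dvd_of_dvd_mul_left
      ((Nat.Prime.coprime_iff_not_dvd pp).mpr fun h => ?_) this
    rcases (Nat.Prime.dvd_mul pp).mp (show p ∣ 2 * 3 by norm_num at h ⊢; exact h) with h' | h' <;>
      · have := Nat.le_of_dvd (by norm_num) h'; omega
  have hz1 : (p : ℤ_[p]) ∣ ∑ i ∈ range p, (i : ℤ_[p]) := by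
    have := (Nat.cast_dvd_cast hn1 : (p:ℤ_[p]) ∣ ((∑ i ∈ range p, i : ℕ) : ℤ_[p]))
    rwa [Nat.cast_sum] at this
  have hz2 : (p : ℤ_[p]) ∣ ∑ i ∈ range p, (i : ℤ_[p])^2 := by
    have := (Nat.cast_dvd_cast hn2 : (p:ℤ_[p]) ∣ ((∑ i ∈ range p, i^2 : ℕ) : ℤ_[p]))
    rwa [Nat.cast_sum] at this
  have hconst : ∀ x : ℤ_[p], (p:ℤ_[p]) ∣ ∑ _i ∈ range p, x := fun x => by
    rw [Finset.sum_const, Finset.card_range, nsmul_eq_mul]; exact dvd_mul_right _ _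
  intro a b
  rw [Ssum]
  fin_cases a <;> fin_cases b <;>
    simp only [Matrix.sum_apply, conjentry, Fin.mk_zero, Fin.mk_one, Matrix.of_apply,
      Matrix.cons_val', Matrix.cons_val_zero, Matrix.cons_val_one, Matrix.head_cons,
      Matrix.empty_val', Matrix.cons_val_fin_one, Matrix.head_fin_const]
  · rw [Finset.sum_sub_distrib, ← Finset.sum_mul]
    exact dvd_sub (hconst _) (hz1.mul_right _)
  · rw [Finset.sum_sub_distrib, Finset.sum_add_distrib, ← Finset.sum_mul, ← Finset.sum_mul]
    exact dvd_sub (dvd_add (hconst _) (hz1.mul_right _)) (hz2.mul_right _)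
  · exact hconst _
  · rw [Finset.sum_add_distrib, ← Finset.sum_mul]
    exact dvd_add (hconst _) (hz1.mul_right _)

/-! ### Generators -/

noncomputable def E12 : M2 p := !![0, 1; 0, 0]
noncomputable def G2 : M2 p := !![0, 0; -1, 0]
noncomputable def G3 : M2 p := !![-1, 1; -1, 1]

noncomputable def uSL : SL p := ⟨u, by norm_num [u, Matrix.det_fin_two_of]⟩
noncomputable def wSL : SL p := ⟨!![0, 1; -1, 0], by norm_num [Matrix.det_fin_two_of]⟩
noncomputable def vSL : SL p := ⟨!![1, 0; 1, 1], by norm_num [Matrix.det_fin_two_of]⟩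

/-- The approximate lifting hypothesis coming from surjectivity mod `p`. -/
def Lift (H : Subgroup (SL p)) : Prop :=
  ∀ g : SL p, ∃ h ∈ H, MDvd (p : ℤ_[p]) (h.val - g.val)

lemma baseQ1 (hp : 5 ≤ p) (hlift : Lift H) : Q H 1 E12 := by
  obtain ⟨h₀, hm, hc⟩ := hlift uSL
  obtain ⟨B, hB⟩ := MDvd.exists_eq hc
  have hXv : h₀.val = u + (p:ℤ_[p]) • B := by
    have : h₀.val - uSL.val = (p:ℤ_[p]) • B := hB
    rw [← this]; show h₀.val = u + (h₀.val - uSL.val); rw [show (uSL : SL p).val = u from rfl]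
    abel
  obtain ⟨D, hD⟩ := prodform B p
  refine ⟨h₀ ^ p, H.pow_mem hm p, ?_⟩
  have hup : (u:M2 p)^p = 1 + ((p:ℤ_[p])^1) • E12 := by
    rw [upow]
    ext a b
    fin_cases a <;> fin_cases b <;> simp [E12, Matrix.one_apply]
  have hgoal : (h₀ ^ p).val - (1 + ((p:ℤ_[p])^1) • E12) =
      (p:ℤ_[p]) • ((u:M2 p)^p * Ssum (uinv * B) p) + ((p:ℤ_[p])^2) • D := by
    rw [val_pow, hXv, hD, hup]
    abel
  rw [hgoal]
  refine MDvd.add ?_ (MDvd.smul_self _ _)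
  refine MDvd.mono ?_ ((MDvd.mul_left ((u:M2 p)^p) (Sp_dvd hp (uinv * B))).smul'
    (d := (p:ℤ_[p])))
  rw [pow_two]

lemma Q_conj_approx (hlift : Lift H) {n : ℕ} {A : M2 p} (g : SL p) (hA : Q H n A) :
    Q H n (g.val * A * (g⁻¹).val) := by
  obtain ⟨h₀, h₀m, hc⟩ := hlift g
  refine Q_congr ?_ (Q_conj h₀m hA)
  have hgh : MDvd (p:ℤ_[p]) (g.val - h₀.val) := by
    have := hc.neg; rwa [neg_sub] at this
  have hinv : MDvd (p:ℤ_[p]) ((g⁻¹).val - (h₀⁻¹).val) := by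
    rw [val_inv, val_inv]
    exact MDvd_adjugate hgh
  have key : g.val * A * (g⁻¹).val - h₀.val * A * (h₀⁻¹).val =
      (g.val - h₀.val) * A * (g⁻¹).val + h₀.val * A * ((g⁻¹).val - (h₀⁻¹).val) := by
    simp only [sub_mul, mul_sub]
    abel
  rw [key]
  exact ((hgh.mul_right _).mul_right _).add (MDvd.mul_left _ hinv)

lemma Q1_G2 (hp : 5 ≤ p) (hlift : Lift H) : Q H 1 G2 := by
  have h := Q_conj_approx hlift wSL (baseQ1 hp hlift)
  have hcomp : (wSL : SL p).val * E12 * ((wSL : SL p)⁻¹).val = G2 := by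
    rw [val_inv]
    show (!![0, 1; -1, 0] : M2 p) * E12 * adjugate !![0, 1; -1, 0] = G2
    rw [Matrix.adjugate_fin_two_of]
    ext a b
    fin_cases a <;> fin_cases b <;>
      simp [E12, G2, Matrix.mul_apply, Fin.sum_univ_two]
  rwa [hcomp] at h

lemma Q1_G3 (hp : 5 ≤ p) (hlift : Lift H) : Q H 1 G3 := by
  have h := Q_conj_approx hlift vSL (baseQ1 hp hlift)
  have hcomp : (vSL : SL p).val * E12 * ((vSL : SL p)⁻¹).val = G3 := by
    rw [val_inv]
    show (!![1, 0; 1, 1] : M2 p) * E12 * adjugate !![1, 0; 1, 1] = G3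
    rw [Matrix.adjugate_fin_two_of]
    ext a b
    fin_cases a <;> fin_cases b <;>
      simp [E12, G3, Matrix.mul_apply, Fin.sum_univ_two]
  rwa [hcomp] at h

/-! ### The core lemma: every trace-divisible matrix is attained at every level -/

lemma core (hp : 5 ≤ p) (hlift : Lift H) {n : ℕ} (hn : 1 ≤ n) {A : M2 p}
    (htr : (p:ℤ_[p]) ∣ A 0 0 + A 1 1) : Q H n A := by
  have lift1 : ∀ {B : M2 p}, Q H 1 B → Q H n B := by
    intro B hB
    refine Nat.le_induction hB (fun m hm ih => Q_pow hp hm ih) n hn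
  have qE : Q H n E12 := lift1 (baseQ1 hp hlift)
  have q2 : Q H n G2 := lift1 (Q1_G2 hp hlift)
  have q3 : Q H n G3 := lift1 (Q1_G3 hp hlift)
  have qs : Q H n ((-(A 0 0)) • G3 + ((A 0 0 + A 0 1) • E12 + (A 0 0 - A 1 0) • G2)) :=
    Q_add hn (Q_smul hn q3 _) (Q_add hn (Q_smul hn qE _) (Q_smul hn q2 _))
  refine Q_congr ?_ qs
  intro a b
  fin_cases a <;> fin_cases b <;>
    simp [E12, G2, G3, Matrix.sub_apply, Matrix.add_apply, Matrix.smul_apply] <;>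
    ring_nf
  · simpa [add_comm] using htr

/-! ### From surjectivity mod `p` to the lifting property -/

lemma lift_of_surj {H : Subgroup (SL p)}
    (hsurj : Subgroup.map
      (Matrix.SpecialLinearGroup.map (n := Fin 2) (PadicInt.toZMod (p := p))) H = ⊤) :
    Lift H := by
  intro g
  have hg : Matrix.SpecialLinearGroup.map (n := Fin 2) (PadicInt.toZMod (p := p)) g ∈
      Subgroup.map (Matrix.SpecialLinearGroup.map (n := Fin 2) (PadicInt.toZMod (p := p))) H := by
    rw [hsurj]; trivial
  obtain ⟨h, hm, hh⟩ := hg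
  refine ⟨h, hm, fun i j => ?_⟩
  have hentry : PadicInt.toZMod (h.val i j) = PadicInt.toZMod (g.val i j) := by
    have h1 := congrArg Subtype.val hh
    have h2 := congrFun (congrFun h1 i) j
    simpa [Matrix.SpecialLinearGroup.map_apply_coe, RingHom.mapMatrix_apply,
      Matrix.map_apply] using h2
  have hker : h.val i j - g.val i j ∈ RingHom.ker (PadicInt.toZMod (p := p)) := by
    rw [RingHom.mem_ker, map_sub, hentry, sub_self]
  rw [PadicInt.ker_toZMod, PadicInt.maximalIdeal_eq_span_p, Ideal.mem_span_singleton] at hker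
  simpa [Matrix.sub_apply] using hker

/-! ### Successive approximation -/

lemma approx (hp : 5 ≤ p) (hlift : Lift H) :
    ∀ n : ℕ, 1 ≤ n → ∀ g : SL p, ∃ h ∈ H, MDvd ((p:ℤ_[p])^n) (h.val - g.val) := by
  intro n hn
  refine Nat.le_induction ?_ ?_ n hn
  · intro g
    obtain ⟨h, hm, hc⟩ := hlift g
    exact ⟨h, hm, by rwa [pow_one]⟩
  · intro n hn ih g
    obtain ⟨h, hm, hc⟩ := ih g
    have hgh : MDvd ((p:ℤ_[p])^n) ((g * h⁻¹).val - 1) := by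
      have hkey : (g * h⁻¹).val - 1 = (g.val - h.val) * (h⁻¹).val := by
        rw [sub_mul, val_mul, val_mul_inv]
      rw [hkey]
      have : MDvd ((p:ℤ_[p])^n) (g.val - h.val) := by
        have := hc.neg; rwa [neg_sub] at this
      exact this.mul_right _
    obtain ⟨A, hA⟩ := hgh.exists_eq
    have hval : (g * h⁻¹).val = 1 + ((p:ℤ_[p])^n) • A := by rw [← hA]; abel
    -- the trace of `A` is divisible by `p`, from `det = 1`
    have hdet : ((g * h⁻¹) : SL p).val.det = 1 := (g * h⁻¹).prop
    rw [hval, Matrix.det_fin_two] at hdet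
    simp only [Matrix.add_apply, Matrix.smul_apply, Matrix.one_apply, smul_eq_mul] at hdet
    norm_num at hdet
    have hfact : ((p:ℤ_[p])^n) * (A 0 0 + A 1 1 +
        ((p:ℤ_[p])^n) * (A 0 0 * A 1 1 - A 0 1 * A 1 0)) = 0 := by
      linear_combination hdet
    have hpn : ((p:ℤ_[p])^n) ≠ 0 :=
      pow_ne_zero _ (Nat.cast_ne_zero.mpr (Fact.out : p.Prime).ne_zero)
    have hz : A 0 0 + A 1 1 +
        ((p:ℤ_[p])^n) * (A 0 0 * A 1 1 - A 0 1 * A 1 0) = 0 :=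
      (mul_eq_zero.mp hfact).resolve_left hpn
    have htr : (p:ℤ_[p]) ∣ A 0 0 + A 1 1 := by
      have : A 0 0 + A 1 1 = -(((p:ℤ_[p])^n) * (A 0 0 * A 1 1 - A 0 1 * A 1 0)) := by
        linear_combination hz
      rw [this]
      exact ((dvd_pow_self (p:ℤ_[p]) (by omega : n ≠ 0)).mul_right _).neg_right
    obtain ⟨h₂, h₂m, hc₂⟩ := core hp hlift (by omega : 1 ≤ n) htr
    refine ⟨h₂ * h, H.mul_mem h₂m hm, ?_⟩
    have hkey2 : (h₂ * h).val - g.val = (h₂.val - (g * h⁻¹).val) * h.val := by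
      rw [sub_mul, val_mul, val_mul, mul_assoc, val_inv_mul, mul_one]
    rw [hkey2, hval]
    exact hc₂.mul_right _

end Stmt10Aux

/-- `SL₂(ℤ_p)` carries the topology induced from the `p`-adic topology on matrices. -/
noncomputable instance stmt10Topology (p : ℕ) [Fact p.Prime] :
    TopologicalSpace (Matrix.SpecialLinearGroup (Fin 2) ℤ_[p]) :=
  instTopologicalSpaceSubtype

/-- For a prime `p ≥ 5`, a closed subgroup of `SL₂(ℤ_p)` that surjects onto
`SL₂(ℤ/pℤ)` under reduction mod `p` is all of `SL₂(ℤ_p)`. -/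
theorem stmt10 (p : ℕ) [Fact p.Prime] (hp : 5 ≤ p)
    (H : Subgroup (Matrix.SpecialLinearGroup (Fin 2) ℤ_[p]))
    (hclosed : IsClosed (H : Set (Matrix.SpecialLinearGroup (Fin 2) ℤ_[p])))
    (hsurj : Subgroup.map
      (Matrix.SpecialLinearGroup.map (n := Fin 2) (PadicInt.toZMod (p := p))) H = ⊤) :
    H = ⊤ := by
  classical
  have hlift : Stmt10Aux.Lift H := Stmt10Aux.lift_of_surj hsurj
  have happrox := Stmt10Aux.approx hp hlift
  rw [Subgroup.eq_top_iff']
  intro g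
  have hseq : ∀ n : ℕ, ∃ h : Stmt10Aux.SL p, h ∈ H ∧
      Stmt10Aux.MDvd ((p:ℤ_[p])^(n+1)) (h.val - g.val) := fun n => by
    obtain ⟨h, hm, hc⟩ := happrox (n+1) (by omega) g
    exact ⟨h, hm, hc⟩
  choose f hfH hfc using hseq
  have hptend : Filter.Tendsto (fun n : ℕ => ((p:ℝ)⁻¹)^(n+1)) Filter.atTop (nhds 0) := by
    have hp1 : 1 < (p:ℝ) := by exact_mod_cast (Fact.out : p.Prime).one_lt
    have h0 : Filter.Tendsto (fun n : ℕ => ((p:ℝ)⁻¹)^n) Filter.atTop (nhds 0) :=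
      tendsto_pow_atTop_nhds_zero_of_lt_one (by positivity) (inv_lt_one_of_one_lt₀ hp1)
    exact h0.comp (Filter.tendsto_add_atTop_nat 1)
  have hvaltend : Filter.Tendsto (fun n => (f n).val) Filter.atTop (nhds g.val) := by
    refine tendsto_pi_nhds.mpr ?_
    intro i
    rw [tendsto_pi_nhds]
    intro j
    rw [tendsto_iff_dist_tendsto_zero]
    refine squeeze_zero (fun n => dist_nonneg) (fun n => ?_) hptend
    rw [dist_eq_norm]
    have hdvd : ((p:ℤ_[p])^(n+1)) ∣ (f n).val i j - g.val i j := by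
      simpa [Matrix.sub_apply] using hfc n i j
    have := (PadicInt.norm_le_pow_iff_mem_span_pow ((f n).val i j - g.val i j) (n+1)).mpr
      (Ideal.mem_span_singleton.mpr hdvd)
    calc ‖(f n).val i j - g.val i j‖ ≤ (p:ℝ) ^ (-(n+1 : ℕ) : ℤ) := this
      _ = ((p:ℝ)⁻¹)^(n+1) := by
        rw [_root_.zpow_neg, zpow_natCast, inv_pow]
  have htend : Filter.Tendsto f Filter.atTop (nhds g) :=
    tendsto_subtype_rng.mpr hvaltend
  exact hclosed.mem_of_tendsto htend (Filter.Eventually.of_forall hfH)
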